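/- arXiv:1802.03587 — 8 statements merged into one kernel-verified Lean document; each statement's English description precedes it below -/
import Mathlib

section
/- Let H = (V, E, ω) be a hypergraph with distinct vertices s, t ∈ V, let f be a maximum (s,t)-flow in the Lawler network N_L of H, and let (𝒮, 𝒱∖𝒮) be the (s,t)-min-cut in which 𝒮 is the set of nodes reachable from s in the residual network N_f. Then for every hypernode v ∈ 𝒮 ∩ V with v ≠ s, the residual network N_f contains a path from s to the second bridging node e″ of at least one net e ∈ I(v). -/
open scoped ENNReal

/-- Capacities of the Lawler network of a hypergraph: nodes are the hypernodes
(`Sum.inl`) together with two bridging nodes per net (`Sum.inr (e, false)` is `e′`,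
`Sum.inr (e, true)` is `e″`). -/
noncomputable def lawlerCap {V E : Type} [DecidableEq V] [DecidableEq E]
    (pins : E → Finset V) (ω : E → ℝ) :
    V ⊕ E × Bool → V ⊕ E × Bool → ℝ≥0∞
  | Sum.inl p, Sum.inr (e, false) => if p ∈ pins e then ⊤ else 0
  | Sum.inr (e, false), Sum.inr (e', true) => if e = e' then ENNReal.ofReal (ω e) else 0
  | Sum.inr (e, true), Sum.inl p => if p ∈ pins e then ⊤ else 0
  | _, _ => 0

/-- `f` is an `(s,t)`-flow for the capacity function `c`. -/
def IsFlow {ν : Type} [Fintype ν] (c : ν → ν → ℝ≥0∞) (s t : ν) (f : ν → ν → ℝ) : Prop :=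
  (∀ u v, (f u v : EReal) ≤ (c u v : EReal)) ∧
  (∀ u v, f u v = - f v u) ∧
  (∀ u, u ≠ s → u ≠ t → ∑ v, f u v = 0)

/-- The value of a flow. -/
noncomputable def flowValue {ν : Type} [Fintype ν] (f : ν → ν → ℝ) (s : ν) : ℝ :=
  ∑ v, f s v

/-- `f` is a maximum `(s,t)`-flow. -/
def IsMaxFlow {ν : Type} [Fintype ν] (c : ν → ν → ℝ≥0∞) (s t : ν) (f : ν → ν → ℝ) : Prop :=
  IsFlow c s t f ∧ ∀ g, IsFlow c s t g → flowValue g s ≤ flowValue f s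

/-- `(u,v)` is an edge of the residual network, i.e. `r_f(u,v) = c(u,v) - f(u,v) > 0`. -/
def ResidualEdge {ν : Type} (c : ν → ν → ℝ≥0∞) (f : ν → ν → ℝ) (u v : ν) : Prop :=
  (f u v : EReal) < (c u v : EReal)

open scoped Classical in
/-- The capacity of the `(s,t)`-cut `(S, 𝒱 ∖ S)`. -/
noncomputable def cutCap {ν : Type} [Fintype ν] (c : ν → ν → ℝ≥0∞) (S : Set ν) : ℝ≥0∞ :=
  ∑ u, ∑ v, if u ∈ S ∧ v ∉ S then c u v else 0

open scoped Classical in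
/-- The cut weight of the bipartition `(S, V ∖ S)` of a hypergraph: the total
weight of all nets split by `S`. -/
noncomputable def hypCutWeight {V E : Type} [Fintype E]
    (pins : E → Finset V) (ω : E → ℝ) (S : Set V) : ℝ :=
  ∑ e, if (∃ p ∈ pins e, p ∈ S) ∧ (∃ p ∈ pins e, p ∉ S) then ω e else 0


private lemma lawler_skew_total {ν : Type} [Fintype ν] (f : ν → ν → ℝ)
    (skew : ∀ u v, f u v = - f v u) : ∑ u, ∑ x, f u x = 0 := by
  have h0 : ∀ u x : ν, f u x + f x u = 0 := fun u x => by rw [skew u x]; ring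
  have h1 : ∑ u, ∑ x, (f u x + f x u) = 0 := by simp [h0]
  have h2 : ∑ u, ∑ x, (f u x + f x u) = (∑ u, ∑ x, f u x) + ∑ u, ∑ x, f x u := by
    simp [Finset.sum_add_distrib]
  have h3 : ∑ u, ∑ x, f x u = ∑ u, ∑ x, f u x := Finset.sum_comm
  linarith

private lemma lawler_value_eq_neg_t {ν : Type} [Fintype ν] [DecidableEq ν]
    (f : ν → ν → ℝ) (s t : ν) (hst : s ≠ t)
    (skew : ∀ u v, f u v = - f v u)
    (cons : ∀ u, u ≠ s → u ≠ t → ∑ v, f u v = 0) :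
    ∑ x, f s x = - ∑ x, f t x := by
  have htot := lawler_skew_total f skew
  have hsub : ∑ u ∈ ({s, t} : Finset ν), ∑ x, f u x = ∑ u, ∑ x, f u x :=
    Finset.sum_subset (Finset.subset_univ _) (by
      intro u _ hu
      simp only [Finset.mem_insert, Finset.mem_singleton, not_or] at hu
      exact cons u hu.1 hu.2)
  rw [Finset.sum_pair hst, htot] at hsub
  linarith

/-- If `f` is a maximum `(s,t)`-flow in the Lawler network of a
hypergraph `H` and `v` is a hypernode other than `s` that is reachable from `s` in the
residual network (i.e. `v ∈ 𝒮 ∩ V` for the reachability min-cut `(𝒮, 𝒱 ∖ 𝒮)`), then the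
residual network contains a path from `s` to the second bridging node `e″` of some net
`e` incident to `v`. -/
theorem lawler_reachable_hypernode_exists_reachable_bridge
    {V E : Type} [Fintype V] [Fintype E] [DecidableEq V] [DecidableEq E]
    (pins : E → Finset V) (ω : E → ℝ) (hω : ∀ e, 0 < ω e)
    (s t : V) (hst : s ≠ t)
    (f : V ⊕ E × Bool → V ⊕ E × Bool → ℝ)
    (hf : IsMaxFlow (lawlerCap pins ω) (Sum.inl s) (Sum.inl t) f)
    (v : V) (hvs : v ≠ s)
    (hv : Relation.ReflTransGen (ResidualEdge (lawlerCap pins ω) f)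
      (Sum.inl s) (Sum.inl v)) :
    ∃ e : E, v ∈ pins e ∧
      Relation.ReflTransGen (ResidualEdge (lawlerCap pins ω) f)
        (Sum.inl s) (Sum.inr (e, true)) := by
  classical
  obtain ⟨⟨hcap, hskew, hcons⟩, hmax⟩ := hf
  -- If capacity is zero, flow is nonpositive.
  have hnonpos : ∀ x y : V ⊕ E × Bool,
      lawlerCap pins ω x y = 0 → f x y ≤ 0 := by
    intro x y h0
    have := hcap x y
    rw [h0, EReal.coe_ennreal_zero] at this
    exact EReal.coe_nonpos.mp this
  -- Main continuation: if some flow leaves `v`, flow must enter `v` through some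
  -- bridging node `(h, true)`, giving a residual edge from `v` to it.
  have key : (∃ u', 0 < f (Sum.inl v) u') →
      ∃ e : E, v ∈ pins e ∧
        Relation.ReflTransGen (ResidualEdge (lawlerCap pins ω) f)
          (Sum.inl s) (Sum.inr (e, true)) := by
    rintro ⟨u', hpos⟩
    have hexists : ∃ x, f (Sum.inl v) x < 0 := by
      by_cases hvt : v = t
      · subst hvt
        by_contra hno
        push_neg at hno
        have hsumpos : 0 < ∑ x, f (Sum.inl v) x :=
          Finset.sum_pos' (fun x _ => hno x) ⟨u', Finset.mem_univ u', hpos⟩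
        have hval := lawler_value_eq_neg_t f (Sum.inl s) (Sum.inl v)
          (by simpa using hst) hskew hcons
        have hzero : IsFlow (lawlerCap pins ω) (Sum.inl s) (Sum.inl v)
            (fun _ _ => (0 : ℝ)) := by
          refine ⟨fun x y => ?_, fun _ _ => by norm_num, fun _ _ _ => by simp⟩
          simpa using EReal.coe_ennreal_nonneg (lawlerCap pins ω x y)
        have hle := hmax _ hzero
        simp only [flowValue, Finset.sum_const_zero] at hle
        linarith [hval, hsumpos, hle]
      · have h0 := hcons (Sum.inl v) (by simp [hvs]) (by simp [hvt])
        by_contra hno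
        push_neg at hno
        have hsumpos : 0 < ∑ x, f (Sum.inl v) x :=
          Finset.sum_pos' (fun x _ => hno x) ⟨u', Finset.mem_univ u', hpos⟩
        linarith
    obtain ⟨x, hx⟩ := hexists
    have hxin : 0 < f x (Sum.inl v) := by rw [hskew x (Sum.inl v)]; linarith
    -- `x` must be a bridging node `(h, true)` with `v ∈ pins h`.
    match x, hx, hxin with
    | Sum.inl w, hx, hxin =>
        exact absurd (hnonpos (Sum.inl w) (Sum.inl v) rfl) (not_le.mpr hxin)
    | Sum.inr (h, false), hx, hxin =>
        exact absurd (hnonpos (Sum.inr (h, false)) (Sum.inl v) rfl) (not_le.mpr hxin)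
    | Sum.inr (h, true), hx, hxin =>
        by_cases hmem : v ∈ pins h
        · refine ⟨h, hmem, hv.tail ?_⟩
          show (f (Sum.inl v) (Sum.inr (h, true)) : EReal)
              < (lawlerCap pins ω (Sum.inl v) (Sum.inr (h, true)) : EReal)
          calc (f (Sum.inl v) (Sum.inr (h, true)) : EReal)
              < ((0 : ℝ) : EReal) := by exact_mod_cast hx
            _ ≤ _ := by simpa using EReal.coe_ennreal_nonneg _
        · have : lawlerCap pins ω (Sum.inr (h, true)) (Sum.inl v) = 0 := by
            show (if v ∈ pins h then (⊤ : ℝ≥0∞) else 0) = 0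
            simp [hmem]
          exact absurd (hnonpos _ _ this) (not_le.mpr hxin)
  -- Take the last edge on the residual path into `v`.
  rcases Relation.ReflTransGen.cases_tail hv with heq | ⟨u, hsu, huv⟩
  · exact absurd (Sum.inl.inj heq) hvs
  · -- helper: if the capacity of the last edge is 0, flow leaves `v` along it.
    have ofzero : lawlerCap pins ω u (Sum.inl v) = 0 → 0 < f (Sum.inl v) u := by
      intro h0
      have hlt : (f u (Sum.inl v) : EReal) < ((0 : ℝ≥0∞) : EReal) := h0 ▸ huv
      rw [EReal.coe_ennreal_zero] at hlt
      have : f u (Sum.inl v) < 0 := EReal.coe_neg'.mp hlt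
      rw [hskew (Sum.inl v) u]; linarith
    match u, hsu, huv, ofzero with
    | Sum.inl w, hsu, huv, ofzero => exact key ⟨_, ofzero rfl⟩
    | Sum.inr (e, false), hsu, huv, ofzero => exact key ⟨_, ofzero rfl⟩
    | Sum.inr (e, true), hsu, huv, ofzero =>
        by_cases hmem : v ∈ pins e
        · exact ⟨e, hmem, hsu⟩
        · refine key ⟨_, ofzero ?_⟩
          show (if v ∈ pins e then (⊤ : ℝ≥0∞) else 0) = 0
          simp [hmem]
end

section
/- Let H = (V, E, ω) be a hypergraph with distinct vertices s, t ∈ V and let f be an (s,t)-flow in the Lawler network N_L of H. Then for every hypernode v ∈ V with v ≠ s, the node v is reachable from s in the residual network N_f if and only if there exists a net e ∈ E with v ∈ e whose second bridging node e″ is reachable from s in N_f. In particular, if 𝒮 denotes the set of nodes reachable from s in N_f, then 𝒮 ∩ V = {s} ∪ {v ∈ V | ∃ e ∈ E : v ∈ e and e″ ∈ 𝒮}. -/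
open scoped ENNReal

section LawlerProof

open Relation

private lemma resid_of_top' {ν : Type} (c : ν → ν → ℝ≥0∞) (f : ν → ν → ℝ) {u v : ν}
    (h : c u v = ⊤) : ResidualEdge c f u v := by
  unfold ResidualEdge
  rw [h, EReal.coe_ennreal_top]
  exact EReal.coe_lt_top _

private lemma resid_of_pos' {ν : Type} (c : ν → ν → ℝ≥0∞) {f : ν → ν → ℝ}
    (hsk : ∀ u v, f u v = - f v u) {x y : ν} (h : 0 < f x y) :
    ResidualEdge c f y x := by
  unfold ResidualEdge
  have h1 : f y x < 0 := by rw [hsk]; linarith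
  have h2 : (f y x : EReal) < ((0:ℝ) : EReal) := by exact_mod_cast h1
  calc (f y x : EReal) < ((0:ℝ):EReal) := h2
    _ = (0:EReal) := by norm_num
    _ ≤ (c y x : EReal) := EReal.coe_ennreal_nonneg _

private lemma cap_ne_zero_of_pos' {ν : Type} {c : ν → ν → ℝ≥0∞} {f : ν → ν → ℝ}
    (hcap : ∀ u v, (f u v : EReal) ≤ (c u v : EReal)) {x y : ν} (h : 0 < f x y) :
    c x y ≠ 0 := by
  intro h0
  have h1 := hcap x y
  rw [h0] at h1
  have h2 : (f x y : EReal) ≤ ((0:ℝ) : EReal) := by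
    refine le_trans h1 ?_
    norm_num
  have : f x y ≤ 0 := by exact_mod_cast h2
  linarith

private lemma cut_cap_zero' {ν : Type} [Fintype ν] (c : ν → ν → ℝ≥0∞) (s t : ν)
    (f : ν → ν → ℝ) (hf : IsFlow c s t f)
    (ht : Relation.ReflTransGen (ResidualEdge c f) s t)
    {x y : ν} (hx : Relation.ReflTransGen (ResidualEdge c f) s x)
    (hy : ¬ Relation.ReflTransGen (ResidualEdge c f) s y) : c x y = 0 := by
  classical
  obtain ⟨hcap, hskew, hcons⟩ := hf
  set R := ResidualEdge c f with hR
  set A : Finset ν := Finset.univ.filter (fun z => Relation.ReflTransGen R s z) with hA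
  set B : Finset ν := Finset.univ.filter (fun z => ¬ Relation.ReflTransGen R s z) with hB
  have hmemA : ∀ z, z ∈ A ↔ Relation.ReflTransGen R s z := by
    intro z; simp [hA]
  have hmemB : ∀ z, z ∈ B ↔ ¬ Relation.ReflTransGen R s z := by
    intro z; simp [hB]
  -- crossing terms are nonpositive
  have hcross : ∀ b ∈ B, ∀ a ∈ A, f b a ≤ 0 := by
    intro b hb a ha
    rw [hmemB] at hb; rw [hmemA] at ha
    have hnr : ¬ R a b := fun h => hb (ha.tail h)
    have hle : (c a b : EReal) ≤ (f a b : EReal) := not_lt.mp hnr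
    have h0 : ((0:ℝ):EReal) ≤ (f a b : EReal) := by
      refine le_trans ?_ hle
      norm_num
      exact EReal.coe_ennreal_nonneg _
    have : (0:ℝ) ≤ f a b := by exact_mod_cast h0
    rw [hskew]; linarith
  -- total crossing flow from B to A is zero
  have hBB : ∑ b ∈ B, ∑ z ∈ B, f b z = 0 := by
    have h1 : ∑ b ∈ B, ∑ z ∈ B, f b z = ∑ z ∈ B, ∑ b ∈ B, f b z := Finset.sum_comm
    have h2 : ∑ z ∈ B, ∑ b ∈ B, f b z = - ∑ z ∈ B, ∑ b ∈ B, f z b := by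
      rw [← Finset.sum_neg_distrib]
      refine Finset.sum_congr rfl fun z _ => ?_
      rw [← Finset.sum_neg_distrib]
      exact Finset.sum_congr rfl fun b _ => hskew b z
    rw [h2] at h1
    linarith
  have hzero : ∀ b ∈ B, ∑ z, f b z = 0 := by
    intro b hb
    rw [hmemB] at hb
    refine hcons b ?_ ?_
    · rintro rfl; exact hb Relation.ReflTransGen.refl
    · rintro rfl; exact hb ht
  have hsplit : ∀ b, ∑ z ∈ A, f b z + ∑ z ∈ B, f b z = ∑ z, f b z := by
    intro b
    exact Finset.sum_filter_add_sum_filter_not Finset.univ _ _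
  have hsum0 : ∑ b ∈ B, ∑ z, f b z = 0 := Finset.sum_eq_zero hzero
  have hsumBA : ∑ b ∈ B, ∑ a ∈ A, f b a = 0 := by
    have : ∑ b ∈ B, (∑ z ∈ A, f b z + ∑ z ∈ B, f b z) = 0 := by
      rw [Finset.sum_congr rfl fun b _ => hsplit b]; exact hsum0
    rw [Finset.sum_add_distrib, hBB] at this
    linarith
  -- so each crossing term vanishes
  have hxA : x ∈ A := (hmemA x).mpr hx
  have hyB : y ∈ B := (hmemB y).mpr hy
  have hinner : ∀ b ∈ B, ∑ a ∈ A, f b a ≤ 0 :=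
    fun b hb => Finset.sum_nonpos (hcross b hb)
  have hyzero : ∑ a ∈ A, f y a = 0 :=
    (Finset.sum_eq_zero_iff_of_nonpos hinner).mp hsumBA y hyB
  have hfyx : f y x = 0 :=
    (Finset.sum_eq_zero_iff_of_nonpos (fun a ha => hcross y hyB a ha)).mp hyzero x hxA
  have hfxy : f x y = 0 := by rw [hskew, hfyx]; ring
  have hnr : ¬ R x y := fun h => hy (hx.tail h)
  have hle : (c x y : EReal) ≤ (f x y : EReal) := not_lt.mp hnr
  rw [hfxy] at hle
  have hle' : (c x y : EReal) ≤ 0 := by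
    refine le_trans hle ?_; norm_num
  exact_mod_cast le_antisymm hle' (EReal.coe_ennreal_nonneg _)

private lemma lc_into_inl' {V E : Type} [DecidableEq V] [DecidableEq E]
    {pins : E → Finset V} {ω : E → ℝ} {x : V ⊕ E × Bool} {v : V}
    (h : lawlerCap pins ω x (Sum.inl v) ≠ 0) :
    ∃ e, v ∈ pins e ∧ x = Sum.inr (e, true) := by
  rcases x with w | ⟨e, b⟩
  · exact absurd rfl h
  · cases b
    · exact absurd rfl h
    · refine ⟨e, ?_, rfl⟩
      by_contra hmem
      exact h (by simp [show lawlerCap pins ω (Sum.inr (e,true)) (Sum.inl v)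
        = if v ∈ pins e then ⊤ else 0 from rfl, hmem])

private lemma lc_from_inl' {V E : Type} [DecidableEq V] [DecidableEq E]
    {pins : E → Finset V} {ω : E → ℝ} {y : V ⊕ E × Bool} {v : V}
    (h : lawlerCap pins ω (Sum.inl v) y ≠ 0) :
    ∃ e, v ∈ pins e ∧ y = Sum.inr (e, false) := by
  rcases y with w | ⟨e, b⟩
  · exact absurd rfl h
  · cases b
    · refine ⟨e, ?_, rfl⟩
      by_contra hmem
      exact h (by simp [show lawlerCap pins ω (Sum.inl v) (Sum.inr (e,false))
        = if v ∈ pins e then ⊤ else 0 from rfl, hmem])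
    · exact absurd rfl h

end LawlerProof

/-- For any `(s,t)`-flow `f` in the Lawler network of a hypergraph and
any hypernode `v ≠ s`, the node `v` is reachable from `s` in the residual network iff
the second bridging node `e″` of some net `e` containing `v` is reachable from `s`.
In particular, the hypernode part of the set `𝒮` of nodes reachable from `s` equals
`{s} ∪ {v | ∃ e ∈ E, v ∈ e ∧ e″ ∈ 𝒮}`. -/
theorem lawler_reachable_hypernode_iff_reachable_bridge
    {V E : Type} [Fintype V] [Fintype E] [DecidableEq V] [DecidableEq E]
    (pins : E → Finset V) (ω : E → ℝ) (hω : ∀ e, 0 < ω e)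
    (s t : V) (hst : s ≠ t)
    (f : V ⊕ E × Bool → V ⊕ E × Bool → ℝ)
    (hf : IsFlow (lawlerCap pins ω) (Sum.inl s) (Sum.inl t) f) :
    (∀ v : V, v ≠ s →
      (Relation.ReflTransGen (ResidualEdge (lawlerCap pins ω) f) (Sum.inl s) (Sum.inl v) ↔
        ∃ e : E, v ∈ pins e ∧
          Relation.ReflTransGen (ResidualEdge (lawlerCap pins ω) f)
            (Sum.inl s) (Sum.inr (e, true)))) ∧
    {v : V | Relation.ReflTransGen (ResidualEdge (lawlerCap pins ω) f)
        (Sum.inl s) (Sum.inl v)} =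
      insert s {v : V | ∃ e : E, v ∈ pins e ∧
        Relation.ReflTransGen (ResidualEdge (lawlerCap pins ω) f)
          (Sum.inl s) (Sum.inr (e, true))} := by
  classical
  obtain ⟨hcap, hskew, hcons⟩ := hf
  have back : ∀ (v : V) (e : E), v ∈ pins e →
      Relation.ReflTransGen (ResidualEdge (lawlerCap pins ω) f)
        (Sum.inl s) (Sum.inr (e, true)) →
      Relation.ReflTransGen (ResidualEdge (lawlerCap pins ω) f)
        (Sum.inl s) (Sum.inl v) := by
    intro v e hm hr
    refine hr.tail (resid_of_top' _ _ ?_)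
    show (if v ∈ pins e then (⊤:ℝ≥0∞) else 0) = ⊤
    simp [hm]
  have fwd : ∀ v : V, v ≠ s →
      Relation.ReflTransGen (ResidualEdge (lawlerCap pins ω) f)
        (Sum.inl s) (Sum.inl v) →
      ∃ e : E, v ∈ pins e ∧
        Relation.ReflTransGen (ResidualEdge (lawlerCap pins ω) f)
          (Sum.inl s) (Sum.inr (e, true)) := by
    intro v hv hreach
    rcases Relation.ReflTransGen.cases_tail hreach with heq | ⟨u, hu, hRu⟩
    · exact absurd (Sum.inl.inj heq) hv
    · by_cases hc0 : lawlerCap pins ω u (Sum.inl v) = 0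
      · have hRu' : (f u (Sum.inl v) : EReal) <
            (lawlerCap pins ω u (Sum.inl v) : EReal) := hRu
        rw [hc0] at hRu'
        have hneg : f u (Sum.inl v) < 0 := by
          have h2 : (f u (Sum.inl v) : EReal) < ((0:ℝ):EReal) := by
            refine lt_of_lt_of_le hRu' ?_
            norm_num
          exact_mod_cast h2
        have hpos : 0 < f (Sum.inl v) u := by
          rw [hskew] at hneg; linarith
        obtain ⟨e, hmem, rfl⟩ := lc_from_inl' (cap_ne_zero_of_pos' hcap hpos)
        by_cases hvt : v = t
        · subst hvt
          refine ⟨e, hmem, ?_⟩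
          by_contra hne
          have hzero := cut_cap_zero' (lawlerCap pins ω) (Sum.inl s) (Sum.inl v) f
            ⟨hcap, hskew, hcons⟩ hreach hu hne
          rw [show lawlerCap pins ω (Sum.inr (e,false)) (Sum.inr (e,true))
            = if e = e then ENNReal.ofReal (ω e) else 0 from rfl] at hzero
          simp [ENNReal.ofReal_eq_zero] at hzero
          linarith [hω e]
        · have hsum : ∑ z, f (Sum.inl v) z = 0 := by
            refine hcons _ ?_ ?_
            · simp [hv]
            · simp [hvt]
          have hex : ∃ z, f (Sum.inl v) z < 0 := by
            by_contra hno
            push_neg at hno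
            have hpos' : 0 < ∑ z, f (Sum.inl v) z :=
              Finset.sum_pos' (fun z _ => hno z)
                ⟨Sum.inr (e,false), Finset.mem_univ _, hpos⟩
            linarith
          obtain ⟨z, hz⟩ := hex
          have hpz : 0 < f z (Sum.inl v) := by rw [hskew] at hz; linarith
          obtain ⟨e3, hm3, rfl⟩ := lc_into_inl' (cap_ne_zero_of_pos' hcap hpz)
          exact ⟨e3, hm3, hreach.tail (resid_of_pos' _ hskew hpz)⟩
      · obtain ⟨e, hm, rfl⟩ := lc_into_inl' hc0
        exact ⟨e, hm, hu⟩
  constructor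
  · intro v hv
    exact ⟨fwd v hv, fun ⟨e, hm, hr⟩ => back v e hm hr⟩
  · ext v
    simp only [Set.mem_setOf_eq, Set.mem_insert_iff]
    by_cases hv : v = s
    · subst hv
      simp only [true_or, iff_true]
      exact Relation.ReflTransGen.refl
    · constructor
      · intro h
        exact Or.inr (fwd v hv h)
      · rintro (rfl | ⟨e, hm, hr⟩)
        · exact Relation.ReflTransGen.refl
        · exact back v e hm hr
end

section
/- Let H = (V, E, ω) be a hypergraph with distinct vertices s, t ∈ V and let f be an (s,t)-flow in the Lawler network N_L of H. If v ∈ V ∖ {s,t} is a hypernode with f(v, e′) > 0 for the first bridging node e′ of some net e ∈ I(v), then there exists a net g ∈ I(v) with f(g″, v) > 0, and consequently the residual network N_f contains the edge (v, g″). -/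
open scoped ENNReal

/-- If a hypernode `v ∉ {s,t}` sends positive flow to the first
bridging node `e′` of an incident net `e` in the Lawler network, then some incident net
`g` has positive flow from its second bridging node `g″` into `v`, and consequently the
residual network contains the edge `(v, g″)`. -/
theorem lawler_exists_residual_edge_to_second_bridge
    {V E : Type} [Fintype V] [Fintype E] [DecidableEq V] [DecidableEq E]
    (pins : E → Finset V) (ω : E → ℝ) (hω : ∀ e, 0 < ω e)
    (s t : V) (hst : s ≠ t)
    (f : V ⊕ E × Bool → V ⊕ E × Bool → ℝ)
    (hf : IsFlow (lawlerCap pins ω) (Sum.inl s) (Sum.inl t) f)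
    (v : V) (hvs : v ≠ s) (hvt : v ≠ t)
    (e : E) (hve : v ∈ pins e)
    (hpos : 0 < f (Sum.inl v) (Sum.inr (e, false))) :
    ∃ g : E, v ∈ pins g ∧ 0 < f (Sum.inr (g, true)) (Sum.inl v) ∧
      ResidualEdge (lawlerCap pins ω) f (Sum.inl v) (Sum.inr (g, true)) := by
  obtain ⟨hcap, hskew, hcons⟩ := hf
  have hnn : ∀ w, lawlerCap pins ω w (Sum.inl v) = 0 → 0 ≤ f (Sum.inl v) w := by
    intro w hw
    have h := hcap w (Sum.inl v)
    rw [hw] at h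
    have h0 : f w (Sum.inl v) ≤ 0 := EReal.coe_nonpos.mp (by simpa using h)
    rw [hskew (Sum.inl v) w]; linarith
  by_cases hex : ∃ g : E, v ∈ pins g ∧ 0 < f (Sum.inr (g, true)) (Sum.inl v)
  · obtain ⟨g, hg, hgf⟩ := hex
    refine ⟨g, hg, hgf, ?_⟩
    unfold ResidualEdge
    have hlt : f (Sum.inl v) (Sum.inr (g, true)) < 0 := by
      rw [hskew]; linarith
    calc (f (Sum.inl v) (Sum.inr (g, true)) : EReal) < ((0 : ℝ) : EReal) := by
          exact_mod_cast hlt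
      _ ≤ _ := by
          simpa using EReal.coe_ennreal_nonneg (lawlerCap pins ω (Sum.inl v) (Sum.inr (g, true)))
  · exfalso
    push_neg at hex
    have hall : ∀ w, 0 ≤ f (Sum.inl v) w := by
      intro w
      match w with
      | Sum.inl p => exact hnn _ (by simp [lawlerCap])
      | Sum.inr (g, false) => exact hnn _ (by simp [lawlerCap])
      | Sum.inr (g, true) =>
        by_cases hp : v ∈ pins g
        · have := hex g hp
          rw [hskew]; linarith
        · exact hnn _ (by simp [lawlerCap, hp])
    have hsum := hcons (Sum.inl v) (by simpa using hvs) (by simpa using hvt)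
    have hpos' : 0 < ∑ w, f (Sum.inl v) w :=
      Finset.sum_pos' (fun w _ => hall w) ⟨Sum.inr (e, false), Finset.mem_univ _, hpos⟩
    linarith
end

section
/- Let G be a finite simple graph on vertex set V, let s, t ∈ V be distinct, and let v ∈ V ∖ {s, t}. Let G′ be the simple graph on V ∖ {v} in which two distinct vertices x, y are adjacent if and only if they are adjacent in G, or both x and y are neighbors of v in G. Then for every set S ⊆ V ∖ {s, t, v}: S separates s from t in G if and only if S separates s from t in G′. Consequently, if vertex weights are assigned with w(v) = ∞, the minimum-weight (s,t)-vertex separators of finite weight in G and in G′ coincide. -/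
open scoped ENNReal

/-- `S` is an `(s,t)`-vertex separator of `G`: every path from `s` to `t` in `G`
contains a vertex of `S`. -/
def Separates {V : Type} (G : SimpleGraph V) (s t : V) (S : Set V) : Prop :=
  ∀ p : G.Walk s t, p.IsPath → ∃ x ∈ S, x ∈ p.support

lemma sep_iff_walk {V : Type} [DecidableEq V] (G : SimpleGraph V) (s t : V) (S : Set V) :
    Separates G s t S ↔ ∀ p : G.Walk s t, ∃ x ∈ S, x ∈ p.support := by
  constructor
  · intro h p
    obtain ⟨x, hxS, hxs⟩ := h p.toPath p.toPath.2
    exact ⟨x, hxS, p.support_toPath_subset hxs⟩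
  · intro h p _
    exact h p

lemma walkA {V : Type} (G : SimpleGraph V) (v : V)
    (G' : SimpleGraph {x : V // x ≠ v})
    (hG' : ∀ x y : {x : V // x ≠ v},
      G'.Adj x y ↔ (x ≠ y ∧ (G.Adj ↑x ↑y ∨ (G.Adj ↑x v ∧ G.Adj ↑y v))))
    {a b : {x : V // x ≠ v}} (p : G'.Walk a b) :
    ∃ q : G.Walk a.1 b.1, ∀ x ∈ q.support,
      x = v ∨ ∃ hx : x ≠ v, (⟨x, hx⟩ : {x : V // x ≠ v}) ∈ p.support := by
  induction p with
  | nil =>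
    rename_i u
    refine ⟨SimpleGraph.Walk.nil, ?_⟩
    intro x hx
    simp only [SimpleGraph.Walk.support_nil, List.mem_singleton] at hx
    subst hx
    exact Or.inr ⟨u.2, by simp⟩
  | @cons x y z h q ih =>
    obtain ⟨q', hq'⟩ := ih
    rw [hG'] at h
    rcases h.2 with hadj | ⟨hxv, hyv⟩
    · refine ⟨SimpleGraph.Walk.cons hadj q', ?_⟩
      intro u hu
      rw [SimpleGraph.Walk.support_cons, List.mem_cons] at hu
      rcases hu with rfl | hu
      · exact Or.inr ⟨x.2, by simp⟩
      · rcases hq' u hu with h1 | ⟨hx, h2⟩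
        · exact Or.inl h1
        · exact Or.inr ⟨hx, by simp [h2]⟩
    · refine ⟨SimpleGraph.Walk.cons hxv (SimpleGraph.Walk.cons hyv.symm q'), ?_⟩
      intro u hu
      simp only [SimpleGraph.Walk.support_cons, List.mem_cons] at hu
      rcases hu with rfl | rfl | hu
      · exact Or.inr ⟨x.2, by simp⟩
      · exact Or.inl rfl
      · rcases hq' u hu with h1 | ⟨hx, h2⟩
        · exact Or.inl h1
        · exact Or.inr ⟨hx, by simp [h2]⟩

lemma walkB {V : Type} (G : SimpleGraph V) (v : V)
    (G' : SimpleGraph {x : V // x ≠ v})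
    (hG' : ∀ x y : {x : V // x ≠ v},
      G'.Adj x y ↔ (x ≠ y ∧ (G.Adj ↑x ↑y ∨ (G.Adj ↑x v ∧ G.Adj ↑y v)))) :
    ∀ (n : ℕ) {a b : V} (ha : a ≠ v) (hb : b ≠ v) (p : G.Walk a b), p.length ≤ n →
    ∃ q : G'.Walk ⟨a, ha⟩ ⟨b, hb⟩, ∀ x ∈ q.support, x.1 ∈ p.support := by
  intro n
  induction n with
  | zero =>
    intro a b ha hb p hp
    cases p with
    | nil => exact ⟨SimpleGraph.Walk.nil, by simp⟩
    | cons h q => simp [SimpleGraph.Walk.length_cons] at hp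
  | succ n ih =>
    intro a b ha hb p hp
    cases p with
    | nil => exact ⟨SimpleGraph.Walk.nil, by simp⟩
    | @cons _ c _ h q =>
      by_cases hc : c = v
      · subst hc
        cases q with
        | nil => exact absurd rfl hb
        | @cons _ d _ h' q' =>
          have hd : d ≠ c := h'.ne'
          have hlen : q'.length ≤ n := by
            simp [SimpleGraph.Walk.length_cons] at hp; omega
          by_cases had : a = d
          · subst had
            obtain ⟨q'', hq''⟩ := ih ha hb q' hlen
            refine ⟨q'', ?_⟩
            intro x hx
            simp only [SimpleGraph.Walk.support_cons, List.mem_cons]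
            exact Or.inr (Or.inr (hq'' x hx))
          · have hadj : G'.Adj ⟨a, ha⟩ ⟨d, hd⟩ := by
              rw [hG']
              exact ⟨fun he => had (congrArg Subtype.val he), Or.inr ⟨h, h'.symm⟩⟩
            obtain ⟨q'', hq''⟩ := ih hd hb q' hlen
            refine ⟨SimpleGraph.Walk.cons hadj q'', ?_⟩
            intro x hx
            simp only [SimpleGraph.Walk.support_cons, List.mem_cons] at hx ⊢
            rcases hx with rfl | hx
            · exact Or.inl rfl
            · exact Or.inr (Or.inr (hq'' x hx))
      · have hadj : G'.Adj ⟨a, ha⟩ ⟨c, hc⟩ := by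
          rw [hG']
          exact ⟨fun he => h.ne (congrArg Subtype.val he), Or.inl h⟩
        have hlen : q.length ≤ n := by
          simp [SimpleGraph.Walk.length_cons] at hp; omega
        obtain ⟨q'', hq''⟩ := ih hc hb q hlen
        refine ⟨SimpleGraph.Walk.cons hadj q'', ?_⟩
        intro x hx
        simp only [SimpleGraph.Walk.support_cons, List.mem_cons] at hx ⊢
        rcases hx with rfl | hx
        · exact Or.inl rfl
        · exact Or.inr (hq'' x hx)

lemma tsum_subtype_eq {V : Type} (v : V) (w : V → ℝ≥0∞) (T : Set V) (hvT : v ∉ T) :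
    (∑' x : T, w x.1) = ∑' x : {x : {x : V // x ≠ v} | ↑x ∈ T}, w x.1.1 := by
  exact (Equiv.tsum_eq
    (⟨fun x => ⟨x.1.1, x.2⟩, fun y => ⟨⟨y.1, fun h => hvT (h ▸ y.2)⟩, y.2⟩,
      fun x => rfl, fun y => rfl⟩ : {x : {x : V // x ≠ v} | ↑x ∈ T} ≃ T)
    (fun y : T => w y.1)).symm

/-- Removing an (infinite-weight) vertex `v ∉ {s,t}` from `G` and
adding a clique between its neighbours preserves the `(s,t)`-vertex separators
`S ⊆ V ∖ {s,t,v}`; consequently, for vertex weights `w` with `w v = ∞`, the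
minimum-weight `(s,t)`-vertex separators of finite weight in `G` and `G′` coincide. -/
theorem separator_clique_replacement {V : Type} [Fintype V] [DecidableEq V]
    (G : SimpleGraph V) (s t v : V) (hst : s ≠ t) (hsv : s ≠ v) (htv : t ≠ v)
    (G' : SimpleGraph {x : V // x ≠ v})
    (hG' : ∀ x y : {x : V // x ≠ v},
      G'.Adj x y ↔ (x ≠ y ∧ (G.Adj ↑x ↑y ∨ (G.Adj ↑x v ∧ G.Adj ↑y v))))
    (w : V → ℝ≥0∞) (hwv : w v = ⊤) :
    (∀ S : Set V, S ⊆ Set.univ \ {s, t, v} →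
      (Separates G s t S ↔
        Separates G' ⟨s, hsv⟩ ⟨t, htv⟩ {x : {x : V // x ≠ v} | ↑x ∈ S})) ∧
    (∀ S : Set V, S ⊆ Set.univ \ {s, t} →
      ((Separates G s t S ∧ (∑' x : S, w x.1) ≠ ⊤ ∧
          ∀ T : Set V, T ⊆ Set.univ \ {s, t} → Separates G s t T →
            (∑' x : T, w x.1) ≠ ⊤ → (∑' x : S, w x.1) ≤ ∑' x : T, w x.1) ↔
        (v ∉ S ∧
          Separates G' ⟨s, hsv⟩ ⟨t, htv⟩ {x : {x : V // x ≠ v} | ↑x ∈ S} ∧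
          (∑' x : S, w x.1) ≠ ⊤ ∧
          ∀ T' : Set {x : V // x ≠ v},
            T' ⊆ Set.univ \ {⟨s, hsv⟩, ⟨t, htv⟩} →
            Separates G' ⟨s, hsv⟩ ⟨t, htv⟩ T' →
            (∑' x : T', w x.1.1) ≠ ⊤ → (∑' x : S, w x.1) ≤ ∑' x : T', w x.1.1))) := by
  -- the key separation equivalence
  have key : ∀ S : Set V, v ∉ S →
      (Separates G s t S ↔
        Separates G' ⟨s, hsv⟩ ⟨t, htv⟩ {x : {x : V // x ≠ v} | ↑x ∈ S}) := by
    intro S hvS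
    rw [sep_iff_walk, sep_iff_walk]
    constructor
    · intro h p'
      obtain ⟨q, hq⟩ := walkA G v G' hG' p'
      obtain ⟨x, hxS, hxq⟩ := h q
      rcases hq x hxq with rfl | ⟨hx, hmem⟩
      · exact absurd hxS hvS
      · exact ⟨⟨x, hx⟩, hxS, hmem⟩
    · intro h p
      obtain ⟨q, hq⟩ := walkB G v G' hG' p.length hsv htv p le_rfl
      obtain ⟨x', hx'S, hx'q⟩ := h q
      exact ⟨x'.1, hx'S, hq x' hx'q⟩
  have mem_top : ∀ T : Set V, v ∈ T → (∑' x : T, w x.1) = ⊤ := by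
    intro T hvT
    refine eq_top_iff.mpr ?_
    have := ENNReal.le_tsum (f := fun x : T => w x.1) ⟨v, hvT⟩
    rwa [hwv] at this
  constructor
  · intro S hS
    exact key S (fun hv => (hS hv).2 (Or.inr (Or.inr rfl)))
  · intro S hS
    constructor
    · rintro ⟨hsep, hfin, hmin⟩
      have hvS : v ∉ S := fun hv => hfin (mem_top S hv)
      refine ⟨hvS, (key S hvS).mp hsep, hfin, ?_⟩
      intro T' hT'sub hT'sep hT'fin
      set T : Set V := Subtype.val '' T' with hT
      have hvT : v ∉ T := by rintro ⟨y, hy, hyv⟩; exact y.2 hyv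
      have hTeq : {x : {x : V // x ≠ v} | ↑x ∈ T} = T' := by
        ext x
        exact Subtype.val_injective.mem_set_image
      have hTsum : (∑' x : T, w x.1) = ∑' x : T', w x.1.1 := by
        rw [tsum_subtype_eq v w T hvT, hTeq]
      have hTsub : T ⊆ Set.univ \ {s, t} := by
        rintro x ⟨y, hy, rfl⟩
        have := hT'sub hy
        simp only [Set.mem_diff, Set.mem_univ, Set.mem_insert_iff, Set.mem_singleton_iff,
          true_and] at this ⊢
        push_neg at this ⊢
        exact ⟨fun h => this.1 (Subtype.ext h), fun h => this.2 (Subtype.ext h)⟩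
      have hTsep : Separates G s t T := by
        refine (key T hvT).mpr ?_
        rwa [hTeq]
      calc (∑' x : S, w x.1) ≤ ∑' x : T, w x.1 :=
            hmin T hTsub hTsep (hTsum ▸ hT'fin)
        _ = ∑' x : T', w x.1.1 := hTsum
    · rintro ⟨hvS, hsep', hfin, hmin⟩
      refine ⟨(key S hvS).mpr hsep', hfin, ?_⟩
      intro T hTsub hTsep hTfin
      have hvT : v ∉ T := fun hv => hTfin (mem_top T hv)
      set T' : Set {x : V // x ≠ v} := {x | ↑x ∈ T} with hT'
      have hT'sub : T' ⊆ Set.univ \ {⟨s, hsv⟩, ⟨t, htv⟩} := by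
        intro x hx
        have := hTsub hx
        simp only [Set.mem_diff, Set.mem_univ, Set.mem_insert_iff, Set.mem_singleton_iff,
          true_and] at this ⊢
        push_neg at this ⊢
        exact ⟨fun h => this.1 (congrArg Subtype.val h), fun h => this.2 (congrArg Subtype.val h)⟩
      have hT'sep : Separates G' ⟨s, hsv⟩ ⟨t, htv⟩ T' := (key T hvT).mp hTsep
      have hTsum : (∑' x : T, w x.1) = ∑' x : T', w x.1.1 := tsum_subtype_eq v w T hvT
      calc (∑' x : S, w x.1) ≤ ∑' x : T', w x.1.1 :=
            hmin T' hT'sub hT'sep (hTsum ▸ hTfin)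
        _ = ∑' x : T, w x.1 := hTsum.symm
end

section
/- Let N = (𝒱, ℰ, c) be a flow network with source s and sink t, and let v ∈ 𝒱 ∖ {s, t} be a node such that (s, v) ∈ ℰ with c(s,v) = ∞ and every edge (v, w) ∈ ℰ leaving v has c(v,w) = ∞. Let N′ be the flow network obtained from N by deleting v together with all edges incident to v, and adding for each out-neighbor w of v in N an edge (s, w) with capacity ∞ (leaving existing infinite-capacity edges unchanged). Then the map 𝒮 ↦ 𝒮 ∖ {v} is a bijection between the finite-capacity (s,t)-cuts of N and the finite-capacity (s,t)-cuts of N′ that preserves cut capacity; in particular, the minimum (s,t)-cut capacities of N and N′ are equal. -/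
open scoped ENNReal

/-!
A cut of finite capacity in `N` that contains `s` must contain `v`, since `c(s,v) = ∞`, and then
every out-neighbour of `v`, since those edges are infinite too. So no edge at `v` and none of the
new edges `(s,w)` of `N′` crosses it, and deleting `v` leaves the capacity unchanged. Conversely
the new infinite edges force a finite cut `S′` of `N′` to contain every out-neighbour of `v`, so
`S′ ∪ {v}` is a finite cut of `N` with the same crossing edges.
-/

section CutCapacity

variable {ν : Type} [Fintype ν]

lemma le_cutCap (c : ν → ν → ℝ≥0∞) {S : Set ν} {u w : ν} (hu : u ∈ S) (hw : w ∉ S) :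
    c u w ≤ cutCap c S := by
  classical
  calc c u w = if u ∈ S ∧ w ∉ S then c u w else 0 := by rw [if_pos ⟨hu, hw⟩]
    _ ≤ ∑ y, if u ∈ S ∧ y ∉ S then c u y else 0 :=
        Finset.single_le_sum (f := fun y => if u ∈ S ∧ y ∉ S then c u y else 0)
          (fun _ _ => zero_le) (Finset.mem_univ w)
    _ ≤ cutCap c S :=
        Finset.single_le_sum (f := fun x => ∑ y, if x ∈ S ∧ y ∉ S then c x y else 0)
          (fun _ _ => zero_le) (Finset.mem_univ u)

lemma mem_of_cutCap_ne_top {c : ν → ν → ℝ≥0∞} {S : Set ν} (hS : cutCap c S ≠ ⊤) {u w : ν}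
    (hu : u ∈ S) (huw : c u w = ⊤) : w ∈ S := by
  by_contra hw
  exact hS (top_le_iff.mp (huw ▸ le_cutCap c hu hw))

lemma mem_and_out_zero_of_cutCap_ne_top {c : ν → ν → ℝ≥0∞} {s v : ν} (hsv : c s v = ⊤)
    (hout : ∀ w, c v w ≠ 0 → c v w = ⊤) {S : Set ν} (hs : s ∈ S) (hS : cutCap c S ≠ ⊤) : v ∈ S ∧ ∀ w ∉ S, c v w = 0 := by
  have hv : v ∈ S := mem_of_cutCap_ne_top hS hs hsv
  exact ⟨hv, fun w hw => by_contra fun h => hw (mem_of_cutCap_ne_top hS hv (hout w h))⟩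

lemma cutCap_congr {c c' : ν → ν → ℝ≥0∞} {S : Set ν}
    (h : ∀ u ∈ S, ∀ w ∉ S, c' u w = c u w) : cutCap c' S = cutCap c S := by
  unfold cutCap
  refine Finset.sum_congr rfl fun u _ => Finset.sum_congr rfl fun w _ => ?_
  split_ifs with huw
  exacts [h u huw.1 w huw.2, rfl]

lemma cutCap_preimage_subtype_ne [DecidableEq ν] (c : ν → ν → ℝ≥0∞) {v : ν} {S : Set ν}
    (hv : v ∈ S) (hout : ∀ w ∉ S, c v w = 0) :
    cutCap (fun x y : {x : ν // x ≠ v} => c x y) (Subtype.val ⁻¹' S) = cutCap c S := by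
  classical
  unfold cutCap
  rw [Fintype.sum_eq_add_sum_subtype_ne _ v]
  have hrow : (∑ w, if v ∈ S ∧ w ∉ S then c v w else 0) = 0 :=
    Finset.sum_eq_zero fun w _ => by split_ifs with h <;> simp [h, hout]
  have hcol (u : ν) : (∑ w, if u ∈ S ∧ w ∉ S then c u w else 0) =
      ∑ w : {x : ν // x ≠ v}, if u ∈ S ∧ (w : ν) ∉ S then c u w else 0 := by
    rw [Fintype.sum_eq_add_sum_subtype_ne _ v, if_neg (fun h => h.2 hv), zero_add]
  simp only [hrow, hcol, zero_add, Set.mem_preimage]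

end CutCapacity

lemma Set.eq_of_preimage_val_eq {ν : Type} {v : ν} {S₁ S₂ : Set ν} (h₁ : v ∈ S₁) (h₂ : v ∈ S₂)
    (h : (Subtype.val ⁻¹' S₁ : Set {x : ν // x ≠ v}) = Subtype.val ⁻¹' S₂) : S₁ = S₂ := by
  ext x
  by_cases hx : x = v
  · subst hx
    exact iff_of_true h₁ h₂
  · exact Set.ext_iff.mp h ⟨x, hx⟩

lemma Set.preimage_val_insert_image_val {ν : Type} {v : ν} (S' : Set {x : ν // x ≠ v}) :
    Subtype.val ⁻¹' insert v (Subtype.val '' S') = S' := by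
  ext x
  simp [x.2]

section SourceNeighborContraction

variable {ν : Type} [Fintype ν] [DecidableEq ν] {c : ν → ν → ℝ≥0∞} {s v : ν}
  {c' : {x : ν // x ≠ v} → {x : ν // x ≠ v} → ℝ≥0∞}

lemma cutCap_preimage_of_out_zero
    (hc' : ∀ x y : {x : ν // x ≠ v}, c' x y = if (x : ν) = s ∧ c v ↑y ≠ 0 then ⊤ else c ↑x ↑y)
    {S : Set ν} (hv : v ∈ S) (hout : ∀ w ∉ S, c v w = 0) :
    cutCap c' (Subtype.val ⁻¹' S) = cutCap c S := by
  rw [← cutCap_preimage_subtype_ne c hv hout]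
  refine cutCap_congr fun x _ y hy => ?_
  rw [hc', if_neg fun h => h.2 (hout y hy)]

lemma out_zero_of_contracted_cutCap_ne_top
    (hc' : ∀ x y : {x : ν // x ≠ v}, c' x y = if (x : ν) = s ∧ c v ↑y ≠ 0 then ⊤ else c ↑x ↑y)
    (hvs : v ≠ s) {S' : Set {x : ν // x ≠ v}} (hs : ⟨s, hvs.symm⟩ ∈ S')
    (hS' : cutCap c' S' ≠ ⊤) : ∀ w ∉ insert v (Subtype.val '' S'), c v w = 0 := by
  intro w hw
  have hwv : w ≠ v := by rintro rfl; exact hw (Set.mem_insert _ _)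
  by_contra h
  refine hw (Set.mem_insert_of_mem v ⟨⟨w, hwv⟩, mem_of_cutCap_ne_top hS' hs ?_, rfl⟩)
  rw [hc', if_pos ⟨rfl, h⟩]

lemma cutCap_preimage_of_cutCap_ne_top
    (hc' : ∀ x y : {x : ν // x ≠ v}, c' x y = if (x : ν) = s ∧ c v ↑y ≠ 0 then ⊤ else c ↑x ↑y)
    (hsv : c s v = ⊤) (hout : ∀ w, c v w ≠ 0 → c v w = ⊤) {S : Set ν} (hs : s ∈ S)
    (hS : cutCap c S ≠ ⊤) : cutCap c' (Subtype.val ⁻¹' S) = cutCap c S :=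
  have ⟨hv, hv_out⟩ := mem_and_out_zero_of_cutCap_ne_top hsv hout hs hS
  cutCap_preimage_of_out_zero hc' hv hv_out

lemma exists_cut_preimage_eq_of_contracted_cutCap_ne_top
    (hc' : ∀ x y : {x : ν // x ≠ v}, c' x y = if (x : ν) = s ∧ c v ↑y ≠ 0 then ⊤ else c ↑x ↑y)
    {t : ν} (hvs : v ≠ s) (hvt : v ≠ t) {S' : Set {x : ν // x ≠ v}} (hs : ⟨s, hvs.symm⟩ ∈ S')
    (ht : ⟨t, hvt.symm⟩ ∉ S') (hS' : cutCap c' S' ≠ ⊤) :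
    ∃ S, s ∈ S ∧ t ∉ S ∧ Subtype.val ⁻¹' S = S' ∧ cutCap c S = cutCap c' S' := by
  have hpre := Set.preimage_val_insert_image_val S'
  refine ⟨insert v (Subtype.val '' S'), ?_, ?_, hpre, ?_⟩
  · exact Set.mem_insert_of_mem v ⟨_, hs, rfl⟩
  · simpa [hvt.symm] using ht
  · rw [← cutCap_preimage_of_out_zero hc' (Set.mem_insert v _)
      (out_zero_of_contracted_cutCap_ne_top hc' hvs hs hS'), hpre]

end SourceNeighborContraction

theorem remove_infinite_capacity_source_neighbor_general {ν : Type} [Fintype ν] [DecidableEq ν]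
    (c : ν → ν → ℝ≥0∞) (s t : ν)
    (v : ν) (hvs : v ≠ s) (hvt : v ≠ t)
    (hsv : c s v = ⊤) (hout : ∀ w : ν, c v w ≠ 0 → c v w = ⊤)
    (c' : {x : ν // x ≠ v} → {x : ν // x ≠ v} → ℝ≥0∞)
    (hc' : ∀ x y : {x : ν // x ≠ v},
      c' x y = if (x : ν) = s ∧ c v ↑y ≠ 0 then ⊤ else c ↑x ↑y) :
    Set.BijOn (fun S : Set ν => ({x : {x : ν // x ≠ v} | ↑x ∈ S}))
      {S : Set ν | s ∈ S ∧ t ∉ S ∧ cutCap c S ≠ ⊤}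
      {S' : Set {x : ν // x ≠ v} |
        ⟨s, Ne.symm hvs⟩ ∈ S' ∧ ⟨t, Ne.symm hvt⟩ ∉ S' ∧ cutCap c' S' ≠ ⊤} ∧
    (∀ S : Set ν, s ∈ S → t ∉ S → cutCap c S ≠ ⊤ →
      cutCap c' {x : {x : ν // x ≠ v} | ↑x ∈ S} = cutCap c S) ∧
    sInf {x : ℝ≥0∞ | ∃ S : Set ν, s ∈ S ∧ t ∉ S ∧ cutCap c S = x} =
      sInf {x : ℝ≥0∞ | ∃ S' : Set {x : ν // x ≠ v},
        ⟨s, Ne.symm hvs⟩ ∈ S' ∧ ⟨t, Ne.symm hvt⟩ ∉ S' ∧ cutCap c' S' = x} := by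
  have hcap (S : Set ν) (hs : s ∈ S) (hS : cutCap c S ≠ ⊤) :=
    cutCap_preimage_of_cutCap_ne_top hc' hsv hout hs hS
  have hlift (S' : Set {x : ν // x ≠ v}) (hs : ⟨s, hvs.symm⟩ ∈ S') (ht : ⟨t, hvt.symm⟩ ∉ S')
      (hS' : cutCap c' S' ≠ ⊤) :=
    exists_cut_preimage_eq_of_contracted_cutCap_ne_top hc' hvs hvt hs ht hS'
  have hv_mem {S : Set ν} (hs : s ∈ S) (hS : cutCap c S ≠ ⊤) : v ∈ S :=
    (mem_and_out_zero_of_cutCap_ne_top hsv hout hs hS).1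
  refine ⟨⟨?maps, ?inj, ?surj⟩, fun S hs _ hS => hcap S hs hS, le_antisymm ?_ ?_⟩
  case maps =>
    rintro S ⟨hs, ht, hS⟩
    exact ⟨hs, ht, hcap S hs hS ▸ hS⟩
  case inj =>
    rintro S₁ ⟨hs₁, -, hS₁⟩ S₂ ⟨hs₂, -, hS₂⟩ h
    exact Set.eq_of_preimage_val_eq (hv_mem hs₁ hS₁) (hv_mem hs₂ hS₂) h
  case surj =>
    rintro S' ⟨hs, ht, hS'⟩
    obtain ⟨S, hs', ht', hpre, hSS'⟩ := hlift S' hs ht hS'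
    exact ⟨S, ⟨hs', ht', hSS' ▸ hS'⟩, hpre⟩
  · refine sInf_le_sInf_of_subset_insert_top ?_
    rintro _ ⟨S', hs, ht, rfl⟩
    refine or_iff_not_imp_left.2 fun hS' => ?_
    obtain ⟨S, hs', ht', -, hSS'⟩ := hlift S' hs ht hS'
    exact ⟨S, hs', ht', hSS'⟩
  · refine sInf_le_sInf_of_subset_insert_top ?_
    rintro _ ⟨S, hs, ht, rfl⟩
    exact or_iff_not_imp_left.2 fun hS => ⟨Subtype.val ⁻¹' S, hs, ht, hcap S hs hS⟩

/-- Let `v ∉ {s,t}` be a node with `c(s,v) = ∞` all of whose outgoing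
edges have infinite capacity, and let `N′` be obtained by deleting `v` (and its incident
edges) and connecting `s` to every out-neighbour of `v` by an infinite-capacity edge.
Then `𝒮 ↦ 𝒮 ∖ {v}` is a capacity-preserving bijection between the finite-capacity
`(s,t)`-cuts of `N` and those of `N′`; in particular the minimum `(s,t)`-cut capacities
agree. -/
theorem remove_infinite_capacity_source_neighbor {ν : Type} [Fintype ν] [DecidableEq ν]
    (c : ν → ν → ℝ≥0∞) (s t : ν) (hst : s ≠ t)
    (v : ν) (hvs : v ≠ s) (hvt : v ≠ t)
    (hsv : c s v = ⊤) (hout : ∀ w : ν, c v w ≠ 0 → c v w = ⊤)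
    (c' : {x : ν // x ≠ v} → {x : ν // x ≠ v} → ℝ≥0∞)
    (hc' : ∀ x y : {x : ν // x ≠ v},
      c' x y = if (x : ν) = s ∧ c v ↑y ≠ 0 then ⊤ else c ↑x ↑y) :
    Set.BijOn (fun S : Set ν => ({x : {x : ν // x ≠ v} | ↑x ∈ S}))
      {S : Set ν | s ∈ S ∧ t ∉ S ∧ cutCap c S ≠ ⊤}
      {S' : Set {x : ν // x ≠ v} |
        ⟨s, Ne.symm hvs⟩ ∈ S' ∧ ⟨t, Ne.symm hvt⟩ ∉ S' ∧ cutCap c' S' ≠ ⊤} ∧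
    (∀ S : Set ν, s ∈ S → t ∉ S → cutCap c S ≠ ⊤ →
      cutCap c' {x : {x : ν // x ≠ v} | ↑x ∈ S} = cutCap c S) ∧
    sInf {x : ℝ≥0∞ | ∃ S : Set ν, s ∈ S ∧ t ∉ S ∧ cutCap c S = x} =
      sInf {x : ℝ≥0∞ | ∃ S' : Set {x : ν // x ≠ v},
        ⟨s, Ne.symm hvs⟩ ∈ S' ∧ ⟨t, Ne.symm hvt⟩ ∉ S' ∧ cutCap c' S' = x} :=
  remove_infinite_capacity_source_neighbor_general c s t v hvs hvt hsv hout c' hc'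
end

section
/- Let N = (𝒱, ℰ, c) be a flow network with source s and sink t, and let b ∈ 𝒱 ∖ {s, t} be a node whose only incoming edge is (a, b) with finite capacity w := c(a,b) and whose only outgoing edge is (b, v) with c(b,v) ≥ w, where a, b, v are pairwise distinct. Let N′ be the flow network obtained from N by deleting b together with its two incident edges and increasing the capacity of (a, v) by w (adding the edge (a, v) with capacity w if it was not present). Then the minimum capacity over all (s,t)-cuts of N equals the minimum capacity over all (s,t)-cuts of N′. -/
open scoped ENNReal

/-!
Split the capacity of a cut of `N` into the part inside `𝒱 ∖ {b}` and the two edges at `b`; the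
first part is the same in `N′`, where the two edges are replaced by the extra capacity `w` on
`(a, v)`. Restricting a cut of `N` to `𝒱 ∖ {b}` can only lower its capacity: if `a ∈ S` and
`v ∉ S`, the path `a → b → v` is cut at `(a, b)` or at `(b, v)`, and both carry at least `w`.
Conversely, a cut of `N′` extends to one of `N` of the same capacity by putting `b` on the side
of `v`.
-/

open Finset

section CutCapacity

variable {ν : Type} [Fintype ν]

open scoped Classical in
lemma cutCap_add (c₁ c₂ : ν → ν → ℝ≥0∞) (S : Set ν) :
    cutCap (c₁ + c₂) S = cutCap c₁ S + cutCap c₂ S := by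
  simp only [cutCap, ← sum_add_distrib, Pi.add_apply]
  refine sum_congr rfl fun u _ ↦ sum_congr rfl fun y _ ↦ ?_
  split_ifs <;> simp

open scoped Classical in
lemma cutCap_single_edge [DecidableEq ν] (a v : ν) (w : ℝ≥0∞) (S : Set ν) :
    cutCap (fun x y ↦ if x = a ∧ y = v then w else 0) S = if a ∈ S ∧ v ∉ S then w else 0 := by
  rw [cutCap, Fintype.sum_eq_single a, Fintype.sum_eq_single v]
  · simp
  · intro y hy; simp [hy]
  · intro x hx; simp [hx]

open scoped Classical in
lemma cutCap_eq_cutCap_subtype_ne_add [DecidableEq ν] (c : ν → ν → ℝ≥0∞) (b : ν) (S : Set ν) :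
    cutCap c S = cutCap (fun x y : {x // x ≠ b} ↦ c x y) (Subtype.val ⁻¹' S) +
      ((∑ y, if b ∈ S ∧ y ∉ S then c b y else 0) +
        ∑ u : {x // x ≠ b}, if (u : ν) ∈ S ∧ b ∉ S then c u b else 0) := by
  simp only [cutCap, Fintype.sum_eq_add_sum_subtype_ne _ b, sum_add_distrib, Set.mem_preimage]
  ring

end CutCapacity

section SeriesNode

variable {ν : Type} {a b v : ν}

open scoped Classical in
lemma series_cut_terms_eq (S : Set ν) (hbv : b ∈ S ↔ v ∈ S) (x w : ℝ≥0∞) :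
    (if b ∈ S ∧ v ∉ S then x else 0) + (if a ∈ S ∧ b ∉ S then w else 0) =
      if a ∈ S ∧ v ∉ S then w else 0 := by
  by_cases hv : v ∈ S <;> simp [hv, hbv]

open scoped Classical in
lemma series_cut_terms_le (S : Set ν) {x w : ℝ≥0∞} (hwx : w ≤ x) :
    (if a ∈ S ∧ v ∉ S then w else 0) ≤
      (if b ∈ S ∧ v ∉ S then x else 0) + (if a ∈ S ∧ b ∉ S then w else 0) := by
  by_cases ha : a ∈ S <;> by_cases hb : b ∈ S <;> by_cases hv : v ∈ S <;> simp [*]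

lemma Subtype.exists_preimage_val_eq_and_mem_iff [DecidableEq ν] (hvb : v ≠ b)
    (S' : Set {x // x ≠ b}) :
    ∃ S : Set ν, Subtype.val ⁻¹' S = S' ∧ (b ∈ S ↔ v ∈ S) := by
  refine ⟨{x | if h : x = b then ⟨v, hvb⟩ ∈ S' else ⟨x, h⟩ ∈ S'}, ?_, ?_⟩
  · ext ⟨x, hx⟩
    simp [hx]
  · simp [hvb]

variable [Fintype ν] [DecidableEq ν] {c : ν → ν → ℝ≥0∞}

open scoped Classical in
lemma cutCap_eq_of_series_node (hab : a ≠ b) (hin : ∀ x, x ≠ a → c x b = 0)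
    (hout : ∀ y, y ≠ v → c b y = 0) (S : Set ν) :
    cutCap c S = cutCap (fun x y : {x // x ≠ b} ↦ c x y) (Subtype.val ⁻¹' S) +
      ((if b ∈ S ∧ v ∉ S then c b v else 0) + (if a ∈ S ∧ b ∉ S then c a b else 0)) := by
  rw [cutCap_eq_cutCap_subtype_ne_add, Fintype.sum_eq_single v, Fintype.sum_eq_single ⟨a, hab⟩]
  · intro x hx
    simp [hin x (fun h ↦ hx (Subtype.ext h))]
  · intro y hy
    simp [hout y hy]

open scoped Classical in
lemma cutCap_of_bypass (hab : a ≠ b) (hbv : b ≠ v)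
    {c' : {x // x ≠ b} → {x // x ≠ b} → ℝ≥0∞}
    (hc' : ∀ x y : {x // x ≠ b},
      c' x y = if (x : ν) = a ∧ (y : ν) = v then c a v + c a b else c x y)
    (S : Set ν) :
    cutCap c' (Subtype.val ⁻¹' S) =
      cutCap (fun x y : {x // x ≠ b} ↦ c x y) (Subtype.val ⁻¹' S) +
        if a ∈ S ∧ v ∉ S then c a b else 0 := by
  have hsplit : c' = (fun x y : {x // x ≠ b} ↦ c x y) +
      fun x y ↦ if x = ⟨a, hab⟩ ∧ y = ⟨v, hbv.symm⟩ then c a b else 0 := by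
    ext x y
    simp only [hc', Pi.add_apply, Subtype.ext_iff]
    split_ifs with h
    · rw [h.1, h.2]
    · simp
  rw [hsplit, cutCap_add, cutCap_single_edge]
  rfl

end SeriesNode

theorem remove_series_node_min_cut_general {ν : Type} [Fintype ν] [DecidableEq ν]
    (c : ν → ν → ℝ≥0∞) (s t : ν)
    (a b v : ν) (hbs : b ≠ s) (hbt : b ≠ t)
    (hab : a ≠ b) (hbv : b ≠ v)
    (hin : ∀ x : ν, x ≠ a → c x b = 0)
    (hout : ∀ y : ν, y ≠ v → c b y = 0)
    (hge : c a b ≤ c b v)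
    (c' : {x : ν // x ≠ b} → {x : ν // x ≠ b} → ℝ≥0∞)
    (hc' : ∀ x y : {x : ν // x ≠ b},
      c' x y = if (x : ν) = a ∧ (y : ν) = v then c a v + c a b else c ↑x ↑y) :
    sInf {x : ℝ≥0∞ | ∃ S : Set ν, s ∈ S ∧ t ∉ S ∧ cutCap c S = x} =
      sInf {x : ℝ≥0∞ | ∃ S' : Set {x : ν // x ≠ b},
        ⟨s, Ne.symm hbs⟩ ∈ S' ∧ ⟨t, Ne.symm hbt⟩ ∉ S' ∧ cutCap c' S' = x} := by
  apply le_antisymm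
  · refine le_sInf ?_
    rintro _ ⟨S', hs, ht, rfl⟩
    obtain ⟨S, rfl, hbS⟩ := Subtype.exists_preimage_val_eq_and_mem_iff hbv.symm S'
    refine sInf_le ⟨S, hs, ht, ?_⟩
    rw [cutCap_eq_of_series_node hab hin hout, cutCap_of_bypass hab hbv hc',
      series_cut_terms_eq S hbS]
  · refine le_sInf ?_
    rintro _ ⟨S, hs, ht, rfl⟩
    refine sInf_le_of_le ⟨Subtype.val ⁻¹' S, hs, ht, rfl⟩ ?_
    rw [cutCap_eq_of_series_node hab hin hout, cutCap_of_bypass hab hbv hc']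
    gcongr
    exact series_cut_terms_le S hge

/-- Let `b ∉ {s,t}` be a node whose only incoming edge is `(a,b)` with
finite capacity `w := c(a,b)` and whose only outgoing edge is `(b,v)` with
`c(b,v) ≥ w`, where `a, b, v` are pairwise distinct. Deleting `b` with its two incident
edges and increasing the capacity of `(a,v)` by `w` preserves the minimum
`(s,t)`-cut capacity. -/
theorem remove_series_node_min_cut {ν : Type} [Fintype ν] [DecidableEq ν]
    (c : ν → ν → ℝ≥0∞) (s t : ν) (hst : s ≠ t)
    (a b v : ν) (hbs : b ≠ s) (hbt : b ≠ t)
    (hab : a ≠ b) (hbv : b ≠ v) (hav : a ≠ v)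
    (hedge : c a b ≠ 0) (hfin : c a b ≠ ⊤)
    (hin : ∀ x : ν, x ≠ a → c x b = 0)
    (hout : ∀ y : ν, y ≠ v → c b y = 0)
    (hge : c a b ≤ c b v)
    (c' : {x : ν // x ≠ b} → {x : ν // x ≠ b} → ℝ≥0∞)
    (hc' : ∀ x y : {x : ν // x ≠ b},
      c' x y = if (x : ν) = a ∧ (y : ν) = v then c a v + c a b else c ↑x ↑y) :
    sInf {x : ℝ≥0∞ | ∃ S : Set ν, s ∈ S ∧ t ∉ S ∧ cutCap c S = x} =
      sInf {x : ℝ≥0∞ | ∃ S' : Set {x : ν // x ≠ b},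
        ⟨s, Ne.symm hbs⟩ ∈ S' ∧ ⟨t, Ne.symm hbt⟩ ∉ S' ∧ cutCap c' S' = x} :=
  remove_series_node_min_cut_general c s t a b v hbs hbt hab hbv hin hout hge c' hc'
end

section
/- Let H = (V, E, ω) be a hypergraph with distinct vertices s, t ∈ V and let N_L be its Lawler network. For every set S ⊆ V with s ∈ S and t ∉ S, define 𝒮 := S ∪ {e′ : e ∈ E, e ∩ S ≠ ∅} ∪ {e″ : e ∈ E, e ⊆ S}. Then (𝒮, 𝒱∖𝒮) is an (s,t)-cut of N_L whose capacity equals exactly the cut weight of the bipartition (S, V∖S) of H, i.e., Σ{ω(e) : e ∈ E, e ∩ S ≠ ∅ and e ∖ S ≠ ∅}; in particular this cut has finite capacity. -/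
open scoped ENNReal

/-- For every `S ⊆ V` with `s ∈ S` and `t ∉ S`, the node set
`𝒮 := S ∪ {e′ | e ∩ S ≠ ∅} ∪ {e″ | e ⊆ S}` yields an `(s,t)`-cut of the Lawler network
whose capacity is exactly the cut weight of the bipartition `(S, V ∖ S)` of the
hypergraph; in particular this cut has finite capacity. -/
theorem lawler_cut_of_hyp_bipartition
    {V E : Type} [Fintype V] [Fintype E] [DecidableEq V] [DecidableEq E]
    (pins : E → Finset V) (ω : E → ℝ) (hω : ∀ e, 0 < ω e)
    (s t : V) (hst : s ≠ t)
    (S : Set V) (hs : s ∈ S) (ht : t ∉ S)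
    (𝒮 : Set (V ⊕ E × Bool))
    (h𝒮 : 𝒮 = {x : V ⊕ E × Bool | match x with
      | Sum.inl p => p ∈ S
      | Sum.inr (e, false) => ∃ p ∈ pins e, p ∈ S
      | Sum.inr (e, true) => ∀ p ∈ pins e, p ∈ S}) :
    Sum.inl s ∈ 𝒮 ∧ Sum.inl t ∉ 𝒮 ∧
    cutCap (lawlerCap pins ω) 𝒮 = ENNReal.ofReal (hypCutWeight pins ω S) ∧
    cutCap (lawlerCap pins ω) 𝒮 ≠ ⊤ := by
  classical
  have memInl : ∀ p : V, (Sum.inl p ∈ 𝒮) = (p ∈ S) := by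
    intro p; rw [h𝒮]; rfl
  have memF : ∀ e : E, (Sum.inr (e, false) ∈ 𝒮) = (∃ p ∈ pins e, p ∈ S) := by
    intro e; rw [h𝒮]; rfl
  have memT : ∀ e : E, (Sum.inr (e, true) ∈ 𝒮) = (∀ p ∈ pins e, p ∈ S) := by
    intro e; rw [h𝒮]; rfl
  have key : cutCap (lawlerCap pins ω) 𝒮
        = ∑ e : E, if (∃ p ∈ pins e, p ∈ S) ∧ (∃ p ∈ pins e, p ∉ S) then
            ENNReal.ofReal (ω e) else 0 := by
    rw [cutCap, Fintype.sum_sum_type]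
    have hV : ∀ p : V, (∑ v : V ⊕ E × Bool,
        if Sum.inl p ∈ 𝒮 ∧ v ∉ 𝒮 then lawlerCap pins ω (Sum.inl p) v else 0) = 0 := by
      intro p
      refine Finset.sum_eq_zero fun v _ => ?_
      rcases v with q | ⟨e, b⟩
      · simp [lawlerCap]
      · cases b
        · by_cases hp : p ∈ pins e
          · have h : ¬ (Sum.inl p ∈ 𝒮 ∧ Sum.inr (e, false) ∉ 𝒮) := by
              rw [memInl, memF]
              rintro ⟨h1, h2⟩; exact h2 ⟨p, hp, h1⟩
            rw [if_neg h]
          · simp [lawlerCap, hp]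
        · simp [lawlerCap]
    rw [Finset.sum_congr rfl (fun p _ => hV p), Finset.sum_const_zero, zero_add,
      Fintype.sum_prod_type]
    refine Finset.sum_congr rfl fun e _ => ?_
    rw [Fintype.sum_bool]
    have htrue : (∑ v : V ⊕ E × Bool,
        if Sum.inr (e, true) ∈ 𝒮 ∧ v ∉ 𝒮 then
          lawlerCap pins ω (Sum.inr (e, true)) v else 0) = 0 := by
      refine Finset.sum_eq_zero fun v _ => ?_
      rcases v with q | ⟨e', b⟩
      · by_cases hq : q ∈ pins e
        · have h : ¬ (Sum.inr (e, true) ∈ 𝒮 ∧ Sum.inl q ∉ 𝒮) := by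
            rw [memT, memInl]
            rintro ⟨h1, h2⟩; exact h2 (h1 q hq)
          rw [if_neg h]
        · simp [lawlerCap, hq]
      · cases b <;> simp [lawlerCap]
    rw [htrue, zero_add]
    rw [Finset.sum_eq_single (Sum.inr (e, true) : V ⊕ E × Bool)]
    · rw [memF, memT]
      simp only [lawlerCap, if_pos rfl]
      by_cases h1 : ∃ p ∈ pins e, p ∈ S
      · by_cases h2 : ∃ p ∈ pins e, p ∉ S
        · have hns : ¬ ∀ p ∈ pins e, p ∈ S := by
            intro hall
            obtain ⟨p, hp, hpS⟩ := h2
            exact hpS (hall p hp)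
          rw [if_pos (⟨h1, hns⟩ : (∃ p ∈ pins e, p ∈ S) ∧ ¬ ∀ p ∈ pins e, p ∈ S)]
          rw [if_pos (⟨h1, h2⟩ : (∃ p ∈ pins e, p ∈ S) ∧ ∃ p ∈ pins e, p ∉ S)]
          simp
        · have hall : ∀ p ∈ pins e, p ∈ S :=
            fun p hp => by_contra fun h => h2 ⟨p, hp, h⟩
          rw [if_neg (fun h : (∃ p ∈ pins e, p ∈ S) ∧ ¬ ∀ p ∈ pins e, p ∈ S => h.2 hall)]
          rw [if_neg (fun h : (∃ p ∈ pins e, p ∈ S) ∧ ∃ p ∈ pins e, p ∉ S => h2 h.2)]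
      · rw [if_neg (fun h : (∃ p ∈ pins e, p ∈ S) ∧ ¬ ∀ p ∈ pins e, p ∈ S => h1 h.1)]
        rw [if_neg (fun h : (∃ p ∈ pins e, p ∈ S) ∧ ∃ p ∈ pins e, p ∉ S => h1 h.1)]
    · intro v _ hv
      rcases v with q | ⟨e', b⟩
      · simp [lawlerCap]
      · cases b
        · simp [lawlerCap]
        · have he' : e ≠ e' := fun h => hv (by rw [h])
          simp [lawlerCap, he']
    · intro h; exact absurd (Finset.mem_univ _) h
  have hmain : cutCap (lawlerCap pins ω) 𝒮 = ENNReal.ofReal (hypCutWeight pins ω S) := by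
    rw [key, hypCutWeight, ENNReal.ofReal_sum_of_nonneg]
    · refine Finset.sum_congr rfl fun e _ => ?_
      split <;> simp
    · intro e _
      split
      · exact (hω e).le
      · exact le_refl 0
  exact ⟨(memInl s) ▸ hs, (memInl t) ▸ ht, hmain, hmain ▸ ENNReal.ofReal_ne_top⟩
end

section
/- Let H = (V, E, ω) be a hypergraph with distinct vertices s, t ∈ V and let N_L be its Lawler network. Then the minimum capacity over all (s,t)-cuts of N_L equals the minimum, over all sets S ⊆ V with s ∈ S and t ∉ S, of the cut weight of the bipartition (S, V∖S) of H, i.e., of Σ{ω(e) : e ∈ E, e ∩ S ≠ ∅ and e ∖ S ≠ ∅}. -/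
open scoped ENNReal

/-!
A cut of finite capacity in the Lawler network cuts no edge of infinite capacity: if a pin of
`e` is on the source side then so is `e′`, and if `e″` is on the source side then so are all
pins of `e`. Its capacity is therefore the total weight of the cut bridging edges, and every net
split by its trace on `V` has its bridging edge cut. Conversely, a set `S ⊆ V` lifts to a cut
that puts `e′` on the source side iff `e` meets `S` and `e″` iff `e ⊆ S`; it cuts exactly the
bridging edges of the nets split by `S`.
-/

open scoped Classical

theorem ofReal_hypCutWeight {V E : Type} [Fintype E] (pins : E → Finset V) (ω : E → ℝ)
    (hω : ∀ e, 0 ≤ ω e) (S : Set V) :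
    ENNReal.ofReal (hypCutWeight pins ω S) = ∑ e,
      if (∃ p ∈ pins e, p ∈ S) ∧ (∃ p ∈ pins e, p ∉ S) then ENNReal.ofReal (ω e) else 0 := by
  rw [hypCutWeight, ENNReal.ofReal_sum_of_nonneg fun e _ => by split <;> simp [hω e]]
  simp only [apply_ite ENNReal.ofReal, ENNReal.ofReal_zero]

theorem cutCap_eq_top_of_mem_of_notMem {ν : Type} [Fintype ν] {c : ν → ν → ℝ≥0∞} {S : Set ν}
    {u v : ν} (hu : u ∈ S) (hv : v ∉ S) (huv : c u v = ⊤) : cutCap c S = ⊤ := by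
  refine top_le_iff.mp ?_
  calc ⊤ = (if u ∈ S ∧ v ∉ S then c u v else 0) := by rw [if_pos ⟨hu, hv⟩, huv]
    _ ≤ ∑ w, if u ∈ S ∧ w ∉ S then c u w else 0 :=
        Finset.single_le_sum (f := fun w => if u ∈ S ∧ w ∉ S then c u w else 0)
          (fun _ _ => zero_le) (Finset.mem_univ v)
    _ ≤ cutCap c S :=
        Finset.single_le_sum (f := fun x => ∑ w, if x ∈ S ∧ w ∉ S then c x w else 0)
          (fun _ _ => zero_le) (Finset.mem_univ u)

section Lawler

variable {V E : Type} (pins : E → Finset V)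

def IsLawlerClosed (𝒮 : Set (V ⊕ E × Bool)) : Prop :=
  ∀ e, ∀ p ∈ pins e, (Sum.inl p ∈ 𝒮 → Sum.inr (e, false) ∈ 𝒮) ∧
    (Sum.inr (e, true) ∈ 𝒮 → Sum.inl p ∈ 𝒮)

def lawlerLift (S : Set V) : Set (V ⊕ E × Bool) :=
  {x | match x with
    | Sum.inl p => p ∈ S
    | Sum.inr (e, false) => ∃ p ∈ pins e, p ∈ S
    | Sum.inr (e, true) => ∀ p ∈ pins e, p ∈ S}

theorem isLawlerClosed_lawlerLift (S : Set V) : IsLawlerClosed pins (lawlerLift pins S) :=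
  fun _ p hp => ⟨fun hpS => ⟨p, hp, hpS⟩, fun hall => hall p hp⟩

variable [Fintype V] [Fintype E] [DecidableEq V] [DecidableEq E] (ω : E → ℝ)

theorem isLawlerClosed_of_cutCap_ne_top {𝒮 : Set (V ⊕ E × Bool)}
    (h : cutCap (lawlerCap pins ω) 𝒮 ≠ ⊤) : IsLawlerClosed pins 𝒮 := by
  refine fun e p hp => ⟨fun hpS => ?_, fun heS => ?_⟩ <;> by_contra hcut <;> refine h ?_
  · exact cutCap_eq_top_of_mem_of_notMem hpS hcut (by simp [lawlerCap, hp])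
  · exact cutCap_eq_top_of_mem_of_notMem heS hcut (by simp [lawlerCap, hp])

theorem cutCap_lawlerCap_of_isLawlerClosed {𝒮 : Set (V ⊕ E × Bool)}
    (h : IsLawlerClosed pins 𝒮) :
    cutCap (lawlerCap pins ω) 𝒮 = ∑ e, if Sum.inr (e, false) ∈ 𝒮 ∧ Sum.inr (e, true) ∉ 𝒮
      then ENNReal.ofReal (ω e) else 0 := by
  simp only [cutCap, lawlerCap, Fintype.sum_sum_type, ite_self, Finset.sum_const_zero,
    Fintype.sum_prod_type, Fintype.univ_bool, Finset.mem_singleton, Bool.true_eq_false,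
    not_false_eq_true, Finset.sum_insert, Finset.sum_singleton, zero_add, add_zero]
  have cut_in : ∀ p e, (if Sum.inl p ∈ 𝒮 ∧ Sum.inr (e, false) ∉ 𝒮 then
      if p ∈ pins e then (⊤ : ℝ≥0∞) else 0 else 0) = 0 := by
    intro p e
    grind [IsLawlerClosed]
  have cut_out : ∀ p e, (if Sum.inr (e, true) ∈ 𝒮 ∧ Sum.inl p ∉ 𝒮 then
      if p ∈ pins e then (⊤ : ℝ≥0∞) else 0 else 0) = 0 := by
    intro p e
    grind [IsLawlerClosed]
  simp only [cut_in, cut_out, Finset.sum_const_zero, zero_add]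
  refine Fintype.sum_congr _ _ fun e => (Fintype.sum_eq_single e fun e' he' => ?_).trans ?_
  · simp [Ne.symm he']
  · simp

theorem cutCap_lawlerLift (hω : ∀ e, 0 ≤ ω e) (S : Set V) :
    cutCap (lawlerCap pins ω) (lawlerLift pins S) = ENNReal.ofReal (hypCutWeight pins ω S) := by
  rw [cutCap_lawlerCap_of_isLawlerClosed pins ω (isLawlerClosed_lawlerLift pins S),
    ofReal_hypCutWeight pins ω hω]
  simp [lawlerLift]

theorem ofReal_hypCutWeight_le_cutCap (hω : ∀ e, 0 ≤ ω e) (𝒮 : Set (V ⊕ E × Bool)) :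
    ENNReal.ofReal (hypCutWeight pins ω {p | Sum.inl p ∈ 𝒮}) ≤ cutCap (lawlerCap pins ω) 𝒮 := by
  by_cases htop : cutCap (lawlerCap pins ω) 𝒮 = ⊤
  · exact htop ▸ le_top
  have hclosed := isLawlerClosed_of_cutCap_ne_top pins ω htop
  rw [cutCap_lawlerCap_of_isLawlerClosed pins ω hclosed, ofReal_hypCutWeight pins ω hω]
  refine Finset.sum_le_sum fun e _ => ?_
  split_ifs with hsplit hbridge
  · exact le_rfl
  · obtain ⟨⟨p, hp, hpS⟩, ⟨q, hq, hqS⟩⟩ := hsplit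
    exact absurd ⟨(hclosed e p hp).1 hpS, fun h => hqS ((hclosed e q hq).2 h)⟩ hbridge
  · exact zero_le
  · exact le_rfl

end Lawler

theorem lawler_min_cut_eq_hyp_min_cut_general
    {V E : Type} [Fintype V] [Fintype E] [DecidableEq V] [DecidableEq E]
    (pins : E → Finset V) (ω : E → ℝ) (hω : ∀ e, 0 < ω e)
    (s t : V) :
    sInf {x : ℝ≥0∞ | ∃ 𝒮 : Set (V ⊕ E × Bool),
        Sum.inl s ∈ 𝒮 ∧ Sum.inl t ∉ 𝒮 ∧ cutCap (lawlerCap pins ω) 𝒮 = x} =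
      sInf {x : ℝ≥0∞ | ∃ S : Set V,
        s ∈ S ∧ t ∉ S ∧ ENNReal.ofReal (hypCutWeight pins ω S) = x} := by
  have hω₀ : ∀ e, 0 ≤ ω e := fun e => (hω e).le
  apply le_antisymm
  · refine le_sInf ?_
    rintro _ ⟨S, hs, ht, rfl⟩
    exact sInf_le ⟨lawlerLift pins S, hs, ht, cutCap_lawlerLift pins ω hω₀ S⟩
  · refine le_sInf ?_
    rintro _ ⟨𝒮, hs, ht, rfl⟩
    exact le_trans (sInf_le ⟨{p | Sum.inl p ∈ 𝒮}, hs, ht, rfl⟩)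
      (ofReal_hypCutWeight_le_cutCap pins ω hω₀ 𝒮)

/-- The minimum capacity over all `(s,t)`-cuts of the Lawler network
of a hypergraph equals the minimum, over all `S ⊆ V` with `s ∈ S` and `t ∉ S`, of the
cut weight of the bipartition `(S, V ∖ S)` of the hypergraph. -/
theorem lawler_min_cut_eq_hyp_min_cut
    {V E : Type} [Fintype V] [Fintype E] [DecidableEq V] [DecidableEq E]
    (pins : E → Finset V) (ω : E → ℝ) (hω : ∀ e, 0 < ω e)
    (s t : V) (hst : s ≠ t) :
    sInf {x : ℝ≥0∞ | ∃ 𝒮 : Set (V ⊕ E × Bool),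
        Sum.inl s ∈ 𝒮 ∧ Sum.inl t ∉ 𝒮 ∧ cutCap (lawlerCap pins ω) 𝒮 = x} =
      sInf {x : ℝ≥0∞ | ∃ S : Set V,
        s ∈ S ∧ t ∉ S ∧ ENNReal.ofReal (hypCutWeight pins ω S) = x} :=
  lawler_min_cut_eq_hyp_min_cut_general pins ω hω s t
end
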